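/- Let A and B be unital C*-algebras, T₀ : A → B a surjective real-linear isometry which is *-preserving, and P a central projection in B commuting with the image of T₀, such that the map T₀'(a) = P·T₀(a) + (1_B − P)·T₀(a)* is complex-linear. Then T₀' is a surjective complex-linear isometry from A onto B. -/

import Mathlib

/-!
`T₀'` is `T₀` followed by `starTwist P : b ↦ P * b + (1 - P) * star b`. As `P` is a central
projection, `starTwist P` is an additive involution of `B`, and it does not increase norms
since `‖P * a + (1 - P) * c‖ ≤ max ‖a‖ ‖c‖`: apply the C*-identity to `star w * w` and, for
self-adjoint `w`, compare the norms of `2 ^ n`-th powers. So `starTwist P` is a surjective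
isometry.
-/

lemma le_of_forall_pow_two_pow_le_mul_pow {x y c : ℝ} (hy : 0 ≤ y)
    (h : ∀ n : ℕ, x ^ 2 ^ n ≤ c * y ^ 2 ^ n) : x ≤ y := by
  by_contra! hyx
  rcases hy.eq_or_lt with rfl | hy
  · exact hyx.not_ge (by simpa using h 0)
  · have hr : 1 < x / y := (one_lt_div hy).mpr hyx
    obtain ⟨n, hn⟩ := pow_unbounded_of_one_lt c hr
    have hle : (x / y) ^ 2 ^ n ≤ c := by
      rw [div_pow, div_le_iff₀ (by positivity)]
      exact h n
    have := pow_le_pow_right₀ hr.le (Nat.lt_two_pow_self (n := n)).le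
    linarith

lemma commute_one_sub_of_forall_commute {R : Type*} [Ring R] {P : R} (hPc : ∀ b, Commute P b)
    (x : R) : Commute (1 - P) x :=
  (Commute.one_left x).sub_left (hPc x)

namespace IsStarProjection

variable {B : Type*}

section Ring

variable [Ring B] [StarRing B] {P : B}

lemma mul_mul_add_one_sub_mul (hP : IsStarProjection P) (a b : B) :
    P * (P * a + (1 - P) * b) = P * a := by
  rw [mul_add, ← mul_assoc, ← mul_assoc, hP.isIdempotentElem.eq, hP.mul_one_sub_self,
    zero_mul, add_zero]

lemma one_sub_mul_mul_add_one_sub_mul (hP : IsStarProjection P) (a b : B) :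
    (1 - P) * (P * a + (1 - P) * b) = (1 - P) * b := by
  simpa only [sub_sub_cancel, add_comm] using hP.one_sub.mul_mul_add_one_sub_mul b a

variable (hP : IsStarProjection P) (hPc : ∀ b, Commute P b)
include hP hPc

lemma mul_add_one_sub_mul_mul (a b c d : B) :
    (P * a + (1 - P) * b) * (P * c + (1 - P) * d) = P * (a * c) + (1 - P) * (b * d) := by
  have hQc (x : B) : Commute x (1 - P) := (commute_one_sub_of_forall_commute hPc x).symm
  simp only [add_mul, mul_add, (hPc a).symm.mul_mul_mul_comm, (hPc b).symm.mul_mul_mul_comm,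
    (hQc a).mul_mul_mul_comm, (hQc b).mul_mul_mul_comm, hP.isIdempotentElem.eq,
    hP.one_sub.isIdempotentElem.eq, hP.mul_one_sub_self, hP.one_sub_mul_self, zero_mul,
    add_zero, zero_add]

lemma star_mul_add_one_sub_mul (a b : B) :
    star (P * a + (1 - P) * b) = P * star a + (1 - P) * star b := by
  rw [star_add, star_mul, star_mul, hP.isSelfAdjoint.star_eq, hP.one_sub.isSelfAdjoint.star_eq,
    ← (hPc _).eq, (commute_one_sub_of_forall_commute hPc _).symm.eq]

lemma isSelfAdjoint_mul_add_one_sub_mul {a b : B} (ha : IsSelfAdjoint a) (hb : IsSelfAdjoint b) :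
    IsSelfAdjoint (P * a + (1 - P) * b) := by
  rw [IsSelfAdjoint, star_mul_add_one_sub_mul hP hPc, ha.star_eq, hb.star_eq]

lemma mul_add_one_sub_mul_pow_succ (a b : B) (n : ℕ) :
    (P * a + (1 - P) * b) ^ (n + 1) = P * a ^ (n + 1) + (1 - P) * b ^ (n + 1) := by
  induction n with
  | zero => simp only [zero_add, pow_one]
  | succ n ih => rw [pow_succ, ih, mul_add_one_sub_mul_mul hP hPc, ← pow_succ, ← pow_succ]

end Ring

section CStarRing

variable [NormedRing B] [StarRing B] [CStarRing B] {P : B}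
  (hP : IsStarProjection P) (hPc : ∀ b, Commute P b)
include hP hPc

/-- The `2 ^ n`-th power of the self-adjoint `P * a + (1 - P) * b` has norm `‖·‖ ^ 2 ^ n`, and
the triangle inequality bounds it by `2 * max ‖a‖ ‖b‖ ^ 2 ^ n`. -/
lemma norm_mul_add_one_sub_mul_le_of_isSelfAdjoint {a b : B} (ha : IsSelfAdjoint a)
    (hb : IsSelfAdjoint b) : ‖P * a + (1 - P) * b‖ ≤ max ‖a‖ ‖b‖ := by
  refine le_of_forall_pow_two_pow_le_mul_pow (c := 2) (le_max_of_le_left (norm_nonneg a))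
    fun n ↦ ?_
  have hn : 2 ^ n = (2 ^ n - 1) + 1 := (Nat.sub_add_cancel Nat.one_le_two_pow).symm
  have hproj {p x : B} (hp : IsStarProjection p) (hx : ‖x‖ ≤ max ‖a‖ ‖b‖) :
      ‖p * x ^ 2 ^ n‖ ≤ max ‖a‖ ‖b‖ ^ 2 ^ n :=
    calc ‖p * x ^ 2 ^ n‖ ≤ ‖p‖ * ‖x ^ 2 ^ n‖ := norm_mul_le _ _
      _ ≤ 1 * ‖x‖ ^ 2 ^ n :=
        mul_le_mul (hp.norm_le p) (norm_pow_le' x (by positivity)) (norm_nonneg _) zero_le_one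
      _ ≤ max ‖a‖ ‖b‖ ^ 2 ^ n := by rw [one_mul]; gcongr
  calc ‖P * a + (1 - P) * b‖ ^ 2 ^ n
      = ‖P * a ^ 2 ^ n + (1 - P) * b ^ 2 ^ n‖ := by
        rw [← (isSelfAdjoint_mul_add_one_sub_mul hP hPc ha hb).norm_pow_two_pow, hn,
          mul_add_one_sub_mul_pow_succ hP hPc]
    _ ≤ ‖P * a ^ 2 ^ n‖ + ‖(1 - P) * b ^ 2 ^ n‖ := norm_add_le _ _
    _ ≤ 2 * max ‖a‖ ‖b‖ ^ 2 ^ n := by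
        linarith [hproj hP (le_max_left _ _), hproj hP.one_sub (le_max_right _ _)]

lemma norm_mul_add_one_sub_mul_le (a b : B) :
    ‖P * a + (1 - P) * b‖ ≤ max ‖a‖ ‖b‖ := by
  have hm : 0 ≤ max ‖a‖ ‖b‖ := (norm_nonneg a).trans (le_max_left _ _)
  rw [mul_self_le_mul_self_iff (norm_nonneg _) hm, ← CStarRing.norm_star_mul_self,
    star_mul_add_one_sub_mul hP hPc, mul_add_one_sub_mul_mul hP hPc]
  calc ‖P * (star a * a) + (1 - P) * (star b * b)‖
      ≤ max ‖star a * a‖ ‖star b * b‖ :=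
        norm_mul_add_one_sub_mul_le_of_isSelfAdjoint hP hPc (.star_mul_self a) (.star_mul_self b)
    _ ≤ max ‖a‖ ‖b‖ * max ‖a‖ ‖b‖ := by
        rw [CStarRing.norm_star_mul_self, CStarRing.norm_star_mul_self]
        exact max_le (mul_self_le_mul_self (norm_nonneg a) (le_max_left _ _))
          (mul_self_le_mul_self (norm_nonneg b) (le_max_right _ _))

end CStarRing

end IsStarProjection

section StarTwist

variable {B : Type*}

def starTwist [Ring B] [StarRing B] (P : B) : B →+ B where
  toFun b := P * b + (1 - P) * star b
  map_zero' := by simp only [star_zero, mul_zero, add_zero]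
  map_add' b c := by simp only [star_add, mul_add]; abel

lemma starTwist_apply [Ring B] [StarRing B] (P b : B) :
    starTwist P b = P * b + (1 - P) * star b := rfl

namespace IsStarProjection

lemma starTwist_involutive [Ring B] [StarRing B] {P : B} (hP : IsStarProjection P)
    (hPc : ∀ b, Commute P b) : Function.Involutive (starTwist P) := fun b ↦ by
  rw [starTwist_apply, starTwist_apply, star_mul_add_one_sub_mul hP hPc, star_star,
    hP.mul_mul_add_one_sub_mul, hP.one_sub_mul_mul_add_one_sub_mul, ← add_mul,
    add_sub_cancel, one_mul]

lemma isometry_starTwist [NormedRing B] [StarRing B] [CStarRing B] {P : B}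
    (hP : IsStarProjection P) (hPc : ∀ b, Commute P b) : Isometry (starTwist P) := by
  have hle (b : B) : ‖starTwist P b‖ ≤ ‖b‖ := by
    simpa only [starTwist_apply, norm_star, max_self] using
      norm_mul_add_one_sub_mul_le hP hPc b (star b)
  refine AddMonoidHomClass.isometry_of_norm _ fun b ↦ (hle b).antisymm ?_
  simpa only [hP.starTwist_involutive hPc b] using hle (starTwist P b)

end IsStarProjection

end StarTwist

theorem stmtN_general
    {A B : Type*}
    [NormedRing A] [NormedAlgebra ℂ A]
    [NormedRing B] [StarRing B] [CStarRing B] [NormedAlgebra ℂ B]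
    (T₀ : A →ₗ[ℝ] B)
    (hsurj : Function.Surjective T₀)
    (hiso : Isometry T₀)
    (P : B) (hP : P * P = P) (hPsa : star P = P)
    (hPc : ∀ b : B, P * b = b * P)
    (T₀' : A → B)
    (hdef : ∀ a : A, T₀' a = P * T₀ a + (1 - P) * star (T₀ a)) :
    Function.Surjective T₀' ∧ Isometry T₀' := by
  have hproj : IsStarProjection P := ⟨hP, hPsa⟩
  obtain rfl : T₀' = starTwist P ∘ T₀ := funext hdef
  exact ⟨(hproj.starTwist_involutive hPc).surjective.comp hsurj,
    (hproj.isometry_starTwist hPc).comp hiso⟩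

theorem stmtN
    {A B : Type*}
    [NormedRing A] [StarRing A] [CStarRing A] [NormedAlgebra ℂ A]
    [CompleteSpace A] [StarModule ℂ A]
    [NormedRing B] [StarRing B] [CStarRing B] [NormedAlgebra ℂ B]
    [CompleteSpace B] [StarModule ℂ B]
    (T₀ : A →ₗ[ℝ] B)
    (hsurj : Function.Surjective T₀)
    (hiso : Isometry T₀)
    (hstar : ∀ x : A, T₀ (star x) = star (T₀ x))
    (P : B) (hP : P * P = P) (hPsa : star P = P)
    (hPc : ∀ b : B, P * b = b * P)
    (T₀' : A → B)
    (hdef : ∀ a : A, T₀' a = P * T₀ a + (1 - P) * star (T₀ a))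
    (hC : ∀ (z : ℂ) (a : A), T₀' (z • a) = z • T₀' a) :
    Function.Surjective T₀' ∧ Isometry T₀' :=
  stmtN_general T₀ hsurj hiso P hP hPsa hPc T₀' hdef
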